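/- Let Φ be irreducible, α ∈ Π, and for k ∈ ℤ let Φ_{α,k} = {γ ∈ Φ : c_α(γ) = k}. For 1 ≤ k ≤ m_α (where m_α is the α-coefficient of the highest root), let γ ∈ Φ_{α,k} have maximal length in Φ_{α,k}, and let Ψ_1,…,Ψ_t be the irreducible components of Φ⟨Π\{α}⟩ with γ ⊥ Ψ_i exactly for i > h. Then the dimension of conv(Φ_{α,k}) equals the rank of Ψ_1 ∪ … ∪ Ψ_h. -/

import Mathlib

/-!
The difference of two roots of level `k` lies in the span of `Δ \ {α}`, the orthogonal sum of
the spans of the components `Ψᵢ`. So it suffices to show that the direction of `conv(Φ_{α,k})`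
contains every `Ψᵢ` not orthogonal to `γ` and is orthogonal to every `Ψᵢ` with `γ ⊥ Ψᵢ`.

If `δ ∈ Φ_{α,k}` and `x ∈ Ψᵢ` with `⟪δ, x⟫ ≠ 0`, then `s_x δ ∈ Φ_{α,k}` and `δ - s_x δ` is a
nonzero multiple of `x`. The roots of `Ψᵢ` seen in this way by `Φ_{α,k}` form a part of `Ψᵢ`
orthogonal to its complement, hence all of `Ψᵢ` as soon as `γ` sees one of them.

Suppose `γ ⊥ Ψᵢ` but some root of level `k` is not. Reflecting in `Δ \ {α}` and maximizing the
height, get `d ∈ Φ_{α,k}` not orthogonal to `Ψᵢ` and a longest `g ∈ Φ_{α,k}` with `g ⊥ Ψᵢ`,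
both dominant for `Δ \ {α}`. If `⟪g, d⟫ ≤ 0`: `g - d` lies in the span `K` of the obtuse basis
`Δ \ {α}` while `g ∉ K`, so `⟪g, d⟫` is the inner product of two dominant vectors of `K`, which
is `≥ 0`, plus `‖g - P_K g‖² > 0`. If `⟪g, d⟫ > 0`: `g - d` is a root of level `0` that sees
`Ψᵢ`, so it lies in `Ψᵢ` and is orthogonal to `g`, and Pythagoras gives `‖d‖ > ‖g‖`.
-/

open scoped RealInnerProductSpace
attribute [local instance] Classical.propDecidable

variable {E : Type*} [NormedAddCommGroup E] [InnerProductSpace ℝ E] [FiniteDimensional ℝ E]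

structure IsRootSystem (Φ : Finset E) : Prop where
  nonzero : ∀ γ ∈ Φ, γ ≠ (0 : E)
  span_top : Submodule.span ℝ (Φ : Set E) = ⊤
  reduced : ∀ γ ∈ Φ, ∀ t : ℝ, t • γ ∈ Φ → t = 1 ∨ t = -1
  reflect : ∀ γ ∈ Φ, ∀ δ ∈ Φ, δ - (2 * ⟪δ, γ⟫ / ⟪γ, γ⟫) • γ ∈ Φ
  cry : ∀ γ ∈ Φ, ∀ δ ∈ Φ, ∃ n : ℤ, 2 * ⟪δ, γ⟫ / ⟪γ, γ⟫ = (n : ℝ)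

/-- `Δ` is a simple system (base) for `Φ`, and `c γ a` is the coordinate of `γ`
on the simple root `a`. -/
structure IsBase (Φ Δ : Finset E) (c : E → E → ℝ) : Prop where
  subset : Δ ⊆ Φ
  indep : LinearIndependent ℝ (fun x : (Δ : Set E) => (x : E))
  repr : ∀ γ ∈ Φ, γ = ∑ a ∈ Δ, c γ a • a
  int : ∀ γ ∈ Φ, ∀ a ∈ Δ, ∃ n : ℤ, c γ a = (n : ℝ)
  sign : ∀ γ ∈ Φ, (∀ a ∈ Δ, 0 ≤ c γ a) ∨ (∀ a ∈ Δ, c γ a ≤ 0)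

def IsIrredSys (Φ : Finset E) : Prop :=
  ∀ s : Set E, s ⊆ (Φ : Set E) → (∀ x ∈ s, ∀ y ∈ (Φ : Set E) \ s, ⟪x, y⟫ = 0) →
    s = ∅ ∨ s = (Φ : Set E)

def IsIrredSet (s : Set E) : Prop :=
  ∀ t : Set E, t ⊆ s → (∀ x ∈ t, ∀ y ∈ s \ t, ⟪x, y⟫ = 0) → t = ∅ ∨ t = s

section InnerProduct

variable {V : Type*} [NormedAddCommGroup V] [InnerProductSpace ℝ V]

theorem inner_nonneg_of_mem_span_of_pairwise_inner_nonpos {s : Finset V}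
    (hs : ∀ a ∈ s, ∀ b ∈ s, a ≠ b → ⟪a, b⟫ ≤ 0) {u w : V} (hw : w ∈ Submodule.span ℝ (s : Set V))
    (hu : ∀ a ∈ s, 0 ≤ ⟪u, a⟫) (hwd : ∀ a ∈ s, 0 ≤ ⟪w, a⟫) : 0 ≤ ⟪u, w⟫ := by
  obtain ⟨f, -, rfl⟩ := Submodule.mem_span_finset.mp hw
  set p := ∑ a ∈ s, max (f a) 0 • a
  set n := ∑ a ∈ s, max (-f a) 0 • a
  have hpn : ∑ a ∈ s, f a • a = p - n := by
    simp only [p, n, ← Finset.sum_sub_distrib, ← sub_smul, max_zero_sub_max_neg_zero_eq_self]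
  -- Positive and negative parts have disjoint supports, so they pair nonpositively.
  have hp_n : ⟪p, n⟫ ≤ 0 := by
    simp only [p, n, sum_inner, inner_sum, real_inner_smul_left, real_inner_smul_right]
    refine Finset.sum_nonpos fun a ha => Finset.sum_nonpos fun b hb => ?_
    obtain rfl | hab := eq_or_ne a b
    · rcases le_total 0 (f a) with h | h <;> simp [h]
    · exact mul_nonpos_of_nonneg_of_nonpos (by positivity)
        (mul_nonpos_of_nonneg_of_nonpos (by positivity) (real_inner_comm a b ▸ hs a ha b hb hab))
  have hw_n : 0 ≤ ⟪∑ a ∈ s, f a • a, n⟫ := by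
    simp only [n, inner_sum, real_inner_smul_right]
    exact Finset.sum_nonneg fun a ha => mul_nonneg (by positivity) (hwd a ha)
  have hn : n = 0 := by
    rw [hpn, inner_sub_left] at hw_n
    exact inner_self_eq_zero.mp (le_antisymm (by linarith) real_inner_self_nonneg)
  rw [hpn, hn, sub_zero, inner_sum]
  exact Finset.sum_nonneg fun a ha => by
    rw [real_inner_smul_right]; exact mul_nonneg (by positivity) (hu a ha)

theorem inner_pos_of_sub_mem_span_of_pairwise_inner_nonpos {s : Finset V}
    (hs : ∀ a ∈ s, ∀ b ∈ s, a ≠ b → ⟪a, b⟫ ≤ 0) {x y : V}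
    (hxy : x - y ∈ Submodule.span ℝ (s : Set V)) (hx : x ∉ Submodule.span ℝ (s : Set V))
    (hxs : ∀ a ∈ s, 0 ≤ ⟪x, a⟫) (hys : ∀ a ∈ s, 0 ≤ ⟪y, a⟫) : 0 < ⟪x, y⟫ := by
  set K := Submodule.span ℝ (s : Set V)
  -- `x` and `y` have the same component `ω` orthogonal to `K`.
  set ω := x - K.starProjection x
  have hωK : ω ∈ Kᗮ := K.sub_starProjection_mem_orthogonal x
  have hx' : x = K.starProjection x + ω := by simp [ω]
  have hy' : y = K.starProjection y + ω := by
    have : K.starProjection (x - y) = x - y := K.starProjection_eq_self_iff.mpr hxy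
    rw [map_sub] at this
    simp only [ω]; linear_combination (norm := abel) this
  have hω : ω ≠ 0 := fun h => hx (by
    rw [sub_eq_zero] at h; rw [h]; exact K.starProjection_apply_mem x)
  have hPs : ∀ v, ∀ a ∈ s, ⟪K.starProjection v, a⟫ = ⟪v, a⟫ := fun v a ha => by
    rw [K.inner_starProjection_left_eq_right,
      K.starProjection_eq_self_iff.mpr (Submodule.subset_span ha)]
  have hcross : ∀ v ∈ K, ⟪ω, v⟫ = 0 := (K.mem_orthogonal' ω).mp hωK
  have hsplit : ⟪x, y⟫ = ⟪K.starProjection x, K.starProjection y⟫ + ⟪ω, ω⟫ := by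
    have := hcross _ (K.starProjection_apply_mem x)
    have := hcross _ (K.starProjection_apply_mem y)
    calc ⟪x, y⟫ = ⟪K.starProjection x + ω, K.starProjection y + ω⟫ := by rw [← hx', ← hy']
      _ = _ := by
        rw [inner_add_left, inner_add_right, inner_add_right, real_inner_comm ω]
        linarith
  have h1 : 0 ≤ ⟪K.starProjection x, K.starProjection y⟫ :=
    inner_nonneg_of_mem_span_of_pairwise_inner_nonpos hs (K.starProjection_apply_mem y)
      (fun a ha => (hPs x a ha).symm ▸ hxs a ha) (fun a ha => (hPs y a ha).symm ▸ hys a ha)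
  have h2 : 0 < ⟪ω, ω⟫ := real_inner_self_pos.mpr hω
  linarith

theorem Submodule.le_of_le_sup_of_isOrtho {A B C : Submodule ℝ V} (hA : A ≤ B ⊔ C)
    (hBC : B ⟂ C) (hAC : A ⟂ C) : A ≤ B := by
  have h := le_inf hA (Submodule.isOrtho_iff_le.mp hAC)
  rwa [sup_inf_assoc_of_le C (Submodule.isOrtho_iff_le.mp hBC), Submodule.inf_orthogonal_eq_bot,
    sup_bot_eq] at h

noncomputable def rootReflection (a v : V) : V := v - (2 * ⟪v, a⟫ / ⟪a, a⟫) • a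

theorem inner_rootReflection_left (a v x : V) :
    ⟪rootReflection a v, x⟫ = ⟪v, x⟫ - 2 * ⟪v, a⟫ / ⟪a, a⟫ * ⟪a, x⟫ := by
  rw [rootReflection, inner_sub_left, real_inner_smul_left]

theorem inner_rootReflection_of_inner_eq_zero {a x : V} (h : ⟪a, x⟫ = 0) (v : V) :
    ⟪rootReflection a v, x⟫ = ⟪v, x⟫ := by
  rw [inner_rootReflection_left, h, mul_zero, sub_zero]

theorem inner_rootReflection_self {a : V} (ha : a ≠ 0) (v : V) :
    ⟪rootReflection a v, a⟫ = -⟪v, a⟫ := by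
  have : ⟪a, a⟫ ≠ 0 := inner_self_ne_zero.mpr ha
  rw [inner_rootReflection_left]
  field_simp
  ring

theorem norm_rootReflection {a : V} (ha : a ≠ 0) (v : V) : ‖rootReflection a v‖ = ‖v‖ := by
  have : ⟪a, a⟫ ≠ 0 := inner_self_ne_zero.mpr ha
  rw [← sq_eq_sq₀ (norm_nonneg _) (norm_nonneg _), ← real_inner_self_eq_norm_sq,
    ← real_inner_self_eq_norm_sq, rootReflection]
  simp only [inner_sub_left, inner_sub_right, real_inner_smul_left, real_inner_smul_right,
    real_inner_comm a v]
  field_simp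
  ring

theorem sub_rootReflection (a v : V) : v - rootReflection a v = (2 * ⟪v, a⟫ / ⟪a, a⟫) • a :=
  sub_sub_cancel v _

theorem rootReflection_self {a : V} (ha : a ≠ 0) : rootReflection a a = -a := by
  have : ⟪a, a⟫ ≠ 0 := inner_self_ne_zero.mpr ha
  rw [rootReflection, show 2 * ⟪a, a⟫ / ⟪a, a⟫ = 2 by field_simp]
  module

end InnerProduct

section RootSystem

variable {V : Type*} [NormedAddCommGroup V] [InnerProductSpace ℝ V] {Φ Δ : Finset V}
  {c : V → V → ℝ}

namespace IsRootSystem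

theorem rootReflection_mem (hΦ : IsRootSystem Φ) {a v : V} (ha : a ∈ Φ) (hv : v ∈ Φ) :
    rootReflection a v ∈ Φ :=
  hΦ.reflect a ha v hv

theorem neg_mem (hΦ : IsRootSystem Φ) {v : V} (hv : v ∈ Φ) : -v ∈ Φ :=
  rootReflection_self (hΦ.nonzero v hv) ▸ hΦ.rootReflection_mem hv hv

theorem sub_mem_of_inner_pos (hΦ : IsRootSystem Φ) {u v : V} (hu : u ∈ Φ) (hv : v ∈ Φ)
    (huv : u ≠ v) (hpos : 0 < ⟪u, v⟫) : u - v ∈ Φ := by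
  obtain ⟨n, hn⟩ := hΦ.cry v hv u hu
  obtain ⟨m, hm⟩ := hΦ.cry u hu v hv
  have hvv : 0 < ⟪v, v⟫ := real_inner_self_pos.mpr (hΦ.nonzero v hv)
  have huu : 0 < ⟪u, u⟫ := real_inner_self_pos.mpr (hΦ.nonzero u hu)
  rw [real_inner_comm] at hm
  have hn0 : (0 : ℤ) < n := by exact_mod_cast hn ▸ (by positivity : (0 : ℝ) < 2 * ⟪u, v⟫ / ⟪v, v⟫)
  have hm0 : (0 : ℤ) < m := by exact_mod_cast hm ▸ (by positivity : (0 : ℝ) < 2 * ⟪u, v⟫ / ⟪u, u⟫)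
  -- The Cartan integers are positive; if both were `≥ 2`, then `‖u - v‖² ≤ 0`.
  obtain rfl | hn2 := (by omega : n = 1 ∨ 2 ≤ n)
  · have := hΦ.rootReflection_mem hv hu
    rwa [rootReflection, hn, Int.cast_one, one_smul] at this
  obtain rfl | hm2 := (by omega : m = 1 ∨ 2 ≤ m)
  · have := hΦ.neg_mem (hΦ.rootReflection_mem hu hv)
    rwa [rootReflection, real_inner_comm, hm, Int.cast_one, one_smul, neg_sub] at this
  have h1 : ⟪v, v⟫ ≤ ⟪u, v⟫ := by
    have : (2 : ℝ) ≤ 2 * ⟪u, v⟫ / ⟪v, v⟫ := hn ▸ (by exact_mod_cast hn2)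
    rw [le_div_iff₀ hvv] at this; linarith
  have h2 : ⟪u, u⟫ ≤ ⟪u, v⟫ := by
    have : (2 : ℝ) ≤ 2 * ⟪u, v⟫ / ⟪u, u⟫ := hm ▸ (by exact_mod_cast hm2)
    rw [le_div_iff₀ huu] at this; linarith
  have h3 : ⟪u - v, u - v⟫ ≤ 0 := by
    simp only [inner_sub_left, inner_sub_right, real_inner_comm u v]; linarith
  exact absurd (sub_eq_zero.mp (real_inner_self_nonpos.mp h3)) huv

end IsRootSystem

def rootHeight (Δ : Finset V) (c : V → V → ℝ) (v : V) : ℝ := ∑ a ∈ Δ, c v a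

def rootLevel (Φ : Finset V) (c : V → V → ℝ) (α : V) (k : ℝ) : Set V :=
  {δ | δ ∈ Φ ∧ c δ α = k}

namespace IsBase

variable {α : V} {k : ℝ}

theorem coord_eq_of_eq_sum (hB : IsBase Φ Δ c) {γ : V} (hγ : γ ∈ Φ) {f : V → ℝ}
    (h : γ = ∑ a ∈ Δ, f a • a) {b : V} (hb : b ∈ Δ) : c γ b = f b :=
  (linearIndepOn_finset_iffₛ (v := id)).mp hB.indep (c γ) f
    (by simpa [← hB.repr γ hγ] using h) b hb

theorem coord_eq_ite (hB : IsBase Φ Δ c) {a b : V} (ha : a ∈ Δ) (hb : b ∈ Δ) :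
    c a b = if b = a then 1 else 0 :=
  hB.coord_eq_of_eq_sum (f := fun x => if x = a then 1 else 0) (hB.subset ha)
    (by simp [ite_smul, ha]) hb

theorem coord_sub_smul (hB : IsBase Φ Δ c) {v w : V} (hv : v ∈ Φ) (hw : w ∈ Φ) {r : ℝ}
    (hvw : v - r • w ∈ Φ) {b : V} (hb : b ∈ Δ) : c (v - r • w) b = c v b - r * c w b := by
  refine hB.coord_eq_of_eq_sum (f := fun a => c v a - r * c w a) hvw ?_ hb
  conv_lhs => rw [hB.repr v hv, hB.repr w hw]
  simp only [Finset.smul_sum, smul_smul, ← Finset.sum_sub_distrib, sub_smul]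

theorem coord_rootReflection (hB : IsBase Φ Δ c) (hΦ : IsRootSystem Φ) {a v : V} (ha : a ∈ Φ)
    (hv : v ∈ Φ) {b : V} (hb : b ∈ Δ) :
    c (rootReflection a v) b = c v b - 2 * ⟪v, a⟫ / ⟪a, a⟫ * c a b :=
  hB.coord_sub_smul hv ha (hΦ.rootReflection_mem ha hv) hb

theorem inner_nonpos_of_ne (hB : IsBase Φ Δ c) (hΦ : IsRootSystem Φ) {a b : V} (ha : a ∈ Δ)
    (hb : b ∈ Δ) (hab : a ≠ b) : ⟪a, b⟫ ≤ 0 := by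
  by_contra! hpos
  have hmem : a - (1 : ℝ) • b ∈ Φ := by
    rw [one_smul]; exact hΦ.sub_mem_of_inner_pos (hB.subset ha) (hB.subset hb) hab hpos
  have hca := hB.coord_sub_smul (hB.subset ha) (hB.subset hb) hmem ha
  have hcb := hB.coord_sub_smul (hB.subset ha) (hB.subset hb) hmem hb
  simp only [hB.coord_eq_ite ha ha, hB.coord_eq_ite hb hb, hB.coord_eq_ite ha hb,
    hB.coord_eq_ite hb ha, if_pos, if_neg hab, if_neg hab.symm] at hca hcb
  rcases hB.sign _ hmem with h | h
  · linarith [h b hb]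
  · linarith [h a ha]

theorem sub_mem_span_erase (hB : IsBase Φ Δ c) (hα : α ∈ Δ) {u v : V} (hu : u ∈ Φ) (hv : v ∈ Φ)
    (h : c u α = c v α) : u - v ∈ Submodule.span ℝ (Δ.erase α : Set V) := by
  have huv : u - v = ∑ a ∈ Δ, (c u a - c v a) • a := by
    simp only [sub_smul, Finset.sum_sub_distrib, ← hB.repr u hu, ← hB.repr v hv]
  rw [huv, ← Finset.add_sum_erase Δ _ hα, h, sub_self, zero_smul, zero_add]
  exact Submodule.sum_mem _ fun a ha => Submodule.smul_mem _ _ (Submodule.subset_span ha)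

theorem notMem_span_erase (hB : IsBase Φ Δ c) (hα : α ∈ Δ) {γ : V} (hγ : γ ∈ Φ)
    (hγα : c γ α ≠ 0) :
    γ ∉ Submodule.span ℝ (Δ.erase α : Set V) := by
  intro hmem
  have hsmul : c γ α • α ∈ Submodule.span ℝ (Δ.erase α : Set V) := by
    have : c γ α • α = γ - ∑ a ∈ Δ.erase α, c γ a • a := by
      rw [eq_sub_iff_add_eq, Finset.add_sum_erase _ (fun a => c γ a • a) hα, ← hB.repr γ hγ]
    rw [this]
    exact sub_mem hmem
      (Submodule.sum_mem _ fun a ha => Submodule.smul_mem _ _ (Submodule.subset_span ha))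
  have := (Submodule.smul_mem_iff _ hγα).mp hsmul
  exact LinearIndepOn.notMem_span (v := id) hB.indep hα (by simpa [Finset.coe_erase] using this)

theorem rootHeight_rootReflection (hB : IsBase Φ Δ c) (hΦ : IsRootSystem Φ) {a v : V}
    (ha : a ∈ Δ) (hv : v ∈ Φ) :
    rootHeight Δ c (rootReflection a v) = rootHeight Δ c v - 2 * ⟪v, a⟫ / ⟪a, a⟫ := by
  have hsum : ∑ b ∈ Δ, c a b = 1 := by
    rw [Finset.sum_congr rfl fun b hb => hB.coord_eq_ite ha hb, Finset.sum_ite_eq',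
      if_pos ha]
  rw [rootHeight, rootHeight, Finset.sum_congr rfl fun b hb => hB.coord_rootReflection hΦ
    (hB.subset ha) hv hb, Finset.sum_sub_distrib, ← Finset.mul_sum, hsum, mul_one]

theorem exists_dominant (hB : IsBase Φ Δ c) (hΦ : IsRootSystem Φ) {D : Finset V} (hD : D ⊆ Δ)
    (P : V → Prop) {v₀ : V} (hv₀ : v₀ ∈ Φ) (hP₀ : P v₀)
    (hP : ∀ v ∈ Φ, P v → ∀ a ∈ D, ⟪v, a⟫ < 0 → P (rootReflection a v)) :
    ∃ d ∈ Φ, P d ∧ ∀ a ∈ D, 0 ≤ ⟪d, a⟫ := by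
  obtain ⟨d, hd, hmax⟩ := (Φ.filter P).exists_max_image (rootHeight Δ c)
    ⟨v₀, Finset.mem_filter.mpr ⟨hv₀, hP₀⟩⟩
  obtain ⟨hdΦ, hPd⟩ := Finset.mem_filter.mp hd
  refine ⟨d, hdΦ, hPd, fun a ha => le_of_not_gt fun hneg => ?_⟩
  have hle := hmax _ (Finset.mem_filter.mpr
    ⟨hΦ.rootReflection_mem (hB.subset (hD ha)) hdΦ, hP d hdΦ hPd a ha hneg⟩)
  have haa : 0 < ⟪a, a⟫ := real_inner_self_pos.mpr (hΦ.nonzero a (hB.subset (hD ha)))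
  have : 2 * ⟪d, a⟫ / ⟪a, a⟫ < 0 := div_neg_of_neg_of_pos (by linarith) haa
  rw [hB.rootHeight_rootReflection hΦ (hD ha) hdΦ] at hle
  linarith

theorem mem_rootLevel_zero_of_mem_erase (hB : IsBase Φ Δ c) (hα : α ∈ Δ) {a : V}
    (ha : a ∈ Δ.erase α) : a ∈ rootLevel Φ c α 0 :=
  ⟨hB.subset (Finset.mem_of_mem_erase ha), by
    rw [hB.coord_eq_ite (Finset.mem_of_mem_erase ha) hα,
      if_neg (Finset.ne_of_mem_erase ha).symm]⟩

theorem rootReflection_mem_rootLevel (hB : IsBase Φ Δ c) (hΦ : IsRootSystem Φ) (hα : α ∈ Δ)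
    {u δ : V} (hu : u ∈ rootLevel Φ c α 0) (hδ : δ ∈ rootLevel Φ c α k) :
    rootReflection u δ ∈ rootLevel Φ c α k :=
  ⟨hΦ.rootReflection_mem hu.1 hδ.1, by
    rw [hB.coord_rootReflection hΦ hu.1 hδ.1 hα, hu.2, mul_zero, sub_zero, hδ.2]⟩

theorem sub_mem_rootLevel_zero (hB : IsBase Φ Δ c) (hΦ : IsRootSystem Φ) (hα : α ∈ Δ)
    {u v : V} (hu : u ∈ rootLevel Φ c α k) (hv : v ∈ rootLevel Φ c α k) (huv : u ≠ v)
    (hpos : 0 < ⟪u, v⟫) : u - v ∈ rootLevel Φ c α 0 := by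
  have hmem : u - (1 : ℝ) • v ∈ Φ := by
    rw [one_smul]; exact hΦ.sub_mem_of_inner_pos hu.1 hv.1 huv hpos
  have := hB.coord_sub_smul hu.1 hv.1 hmem hα
  rw [one_smul] at hmem this
  exact ⟨hmem, by rw [this, hu.2, hv.2]; ring⟩

theorem mem_vectorSpan_rootLevel (hB : IsBase Φ Δ c) (hΦ : IsRootSystem Φ) (hα : α ∈ Δ)
    {u δ : V} (hu : u ∈ rootLevel Φ c α 0) (hδ : δ ∈ rootLevel Φ c α k) (hδu : ⟪δ, u⟫ ≠ 0) :
    u ∈ vectorSpan ℝ (rootLevel Φ c α k) := by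
  have hr : 2 * ⟪δ, u⟫ / ⟪u, u⟫ ≠ 0 :=
    div_ne_zero (mul_ne_zero two_ne_zero hδu) (inner_self_ne_zero.mpr (hΦ.nonzero u hu.1))
  have h := vsub_mem_vectorSpan ℝ hδ (hB.rootReflection_mem_rootLevel hΦ hα hu hδ)
  rw [vsub_eq_sub, sub_rootReflection] at h
  exact (Submodule.smul_mem_iff _ hr).mp h

theorem vectorSpan_rootLevel_le_span_erase (hB : IsBase Φ Δ c) (hα : α ∈ Δ) :
    vectorSpan ℝ (rootLevel Φ c α k) ≤ Submodule.span ℝ (Δ.erase α : Set V) := by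
  rw [vectorSpan_def, Submodule.span_le]
  rintro _ ⟨u, hu, v, hv, rfl⟩
  exact hB.sub_mem_span_erase hα hu.1 hv.1 (hu.2.trans hv.2.symm)

theorem subset_vectorSpan_rootLevel (hB : IsBase Φ Δ c) (hΦ : IsRootSystem Φ) (hα : α ∈ Δ)
    {Ψ : Set V} (hΨ : Ψ ⊆ rootLevel Φ c α 0) (hirr : IsIrredSet Ψ) {γ : V}
    (hγ : γ ∈ rootLevel Φ c α k) (hγΨ : ∃ y ∈ Ψ, ⟪γ, y⟫ ≠ 0) :
    Ψ ⊆ vectorSpan ℝ (rootLevel Φ c α k) := by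
  set T := {y ∈ Ψ | ∃ δ ∈ rootLevel Φ c α k, ⟪δ, y⟫ ≠ 0}
  have hT : T = Ψ := by
    refine (hirr T (fun y hy => hy.1) ?_).resolve_left ?_
    · rintro u ⟨hu, δ, hδ, hδu⟩ v ⟨hv, hvT⟩
      by_contra huv
      have hδv : ⟪δ, v⟫ = 0 := by
        by_contra h
        exact hvT ⟨hv, δ, hδ, h⟩
      refine hvT ⟨hv, rootReflection u δ, hB.rootReflection_mem_rootLevel hΦ hα (hΨ hu) hδ, ?_⟩
      rw [inner_rootReflection_left, hδv, zero_sub, neg_ne_zero]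
      exact mul_ne_zero (div_ne_zero (mul_ne_zero two_ne_zero hδu)
        (inner_self_ne_zero.mpr (hΦ.nonzero u (hΨ hu).1))) huv
    · obtain ⟨y, hy, hγy⟩ := hγΨ
      exact Set.nonempty_iff_ne_empty.mp ⟨y, hy, γ, hγ, hγy⟩
  intro x hx
  obtain ⟨-, δ, hδ, hδx⟩ : x ∈ T := hT ▸ hx
  exact hB.mem_vectorSpan_rootLevel hΦ hα (hΨ hx) hδ hδx

theorem rootLevel_orthogonal_of_longest_orthogonal (hB : IsBase Φ Δ c) (hΦ : IsRootSystem Φ)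
    (hα : α ∈ Δ) (hk : k ≠ 0) {Ψ : Set V}
    (hΨ : ∀ β ∈ rootLevel Φ c α 0, β ∈ Ψ ∨ ∀ x ∈ Ψ, ⟪β, x⟫ = 0) {γ : V}
    (hγ : γ ∈ rootLevel Φ c α k) (hγmax : ∀ δ ∈ rootLevel Φ c α k, ‖δ‖ ≤ ‖γ‖)
    (hγΨ : ∀ x ∈ Ψ, ⟪γ, x⟫ = 0) : ∀ δ ∈ rootLevel Φ c α k, ∀ x ∈ Ψ, ⟪δ, x⟫ = 0 := by
  by_contra! ⟨δ, hδ, x, hx, hδx⟩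
  have hD : Δ.erase α ⊆ Δ := Finset.erase_subset α Δ
  obtain ⟨d, -, ⟨hd, y, hy, hdy⟩, hd_dom⟩ := hB.exists_dominant hΦ hD
      (fun v => v ∈ rootLevel Φ c α k ∧ ∃ y ∈ Ψ, ⟪v, y⟫ ≠ 0) hδ.1 ⟨hδ, x, hx, hδx⟩ <| by
    rintro v - ⟨hv, y, hy, hvy⟩ a ha hva
    have ha₀ := hB.mem_rootLevel_zero_of_mem_erase hα ha
    refine ⟨hB.rootReflection_mem_rootLevel hΦ hα ha₀ hv, ?_⟩
    rcases hΨ a ha₀ with haΨ | haΨ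
    · exact ⟨a, haΨ, by rw [inner_rootReflection_self (hΦ.nonzero a ha₀.1)]; linarith⟩
    · exact ⟨y, hy, by rwa [inner_rootReflection_of_inner_eq_zero (haΨ y hy)]⟩
  obtain ⟨g, -, ⟨hg, hg_norm, hgΨ⟩, hg_dom⟩ := hB.exists_dominant hΦ hD
      (fun v => v ∈ rootLevel Φ c α k ∧ ‖v‖ = ‖γ‖ ∧ ∀ y ∈ Ψ, ⟪v, y⟫ = 0) hγ.1
      ⟨hγ, rfl, hγΨ⟩ <| by
    rintro v - ⟨hv, hv_norm, hvΨ⟩ a ha hva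
    have ha₀ := hB.mem_rootLevel_zero_of_mem_erase hα ha
    have haΨ := (hΨ a ha₀).resolve_left fun haΨ => hva.ne (hvΨ a haΨ)
    refine ⟨hB.rootReflection_mem_rootLevel hΦ hα ha₀ hv, ?_, fun y hy => ?_⟩
    · rw [norm_rootReflection (hΦ.nonzero a ha₀.1), hv_norm]
    · rw [inner_rootReflection_of_inner_eq_zero (haΨ y hy), hvΨ y hy]
  have hgd : g ≠ d := fun h => hdy (h ▸ hgΨ y hy)
  rcases le_or_gt ⟪g, d⟫ 0 with hgd_nonpos | hgd_pos
  · refine hgd_nonpos.not_gt (inner_pos_of_sub_mem_span_of_pairwise_inner_nonpos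
      (fun a ha b hb => hB.inner_nonpos_of_ne hΦ (hD ha) (hD hb))
      (hB.sub_mem_span_erase hα hg.1 hd.1 (hg.2.trans hd.2.symm))
      (hB.notMem_span_erase hα hg.1 (hg.2 ▸ hk)) hg_dom hd_dom)
  · have hgd₀ := hB.sub_mem_rootLevel_zero hΦ hα hg hd hgd hgd_pos
    have hgdΨ : g - d ∈ Ψ := (hΨ _ hgd₀).resolve_right fun h => hdy <| by
      simpa [inner_sub_left, hgΨ y hy] using h y hy
    have hpyth := norm_sub_sq_eq_norm_sq_add_norm_sq_real (hgΨ _ hgdΨ)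
    rw [sub_sub_cancel] at hpyth
    have hdg : ‖d‖ ≤ ‖g‖ := hg_norm ▸ hγmax d hd
    have : ‖g - d‖ = 0 := by nlinarith [norm_nonneg d, norm_nonneg g, norm_nonneg (g - d)]
    exact hΦ.nonzero _ hgd₀.1 (norm_eq_zero.mp this)

theorem vectorSpan_rootLevel_le_span (hB : IsBase Φ Δ c) (hα : α ∈ Δ) {ι : Type*}
    {Ψ : ι → Set V} (hcover : rootLevel Φ c α 0 ⊆ ⋃ i, Ψ i)
    (horth : ∀ i j, i ≠ j → ∀ x ∈ Ψ i, ∀ y ∈ Ψ j, ⟪x, y⟫ = 0) (p : ι → Prop)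
    (hperp : ∀ i, ¬ p i → ∀ δ ∈ rootLevel Φ c α k, ∀ x ∈ Ψ i, ⟪δ, x⟫ = 0) :
    vectorSpan ℝ (rootLevel Φ c α k) ≤ Submodule.span ℝ {x | ∃ i, p i ∧ x ∈ Ψ i} := by
  set U := {x | ∃ i, p i ∧ x ∈ Ψ i}
  set W := {x | ∃ i, ¬ p i ∧ x ∈ Ψ i}
  have hUW : Submodule.span ℝ U ⟂ Submodule.span ℝ W := by
    rw [Submodule.isOrtho_span]
    rintro x ⟨i, hi, hx⟩ y ⟨j, hj, hy⟩
    exact horth i j (fun hij => hj (hij ▸ hi)) x hx y hy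
  have hSW : vectorSpan ℝ (rootLevel Φ c α k) ⟂ Submodule.span ℝ W := by
    rw [vectorSpan_def, Submodule.isOrtho_span]
    rintro _ ⟨u, hu, v, hv, rfl⟩ y ⟨i, hi, hy⟩
    change ⟪u - v, y⟫ = 0
    rw [inner_sub_left, hperp i hi u hu y hy, hperp i hi v hv y hy, sub_zero]
  have hSUW : vectorSpan ℝ (rootLevel Φ c α k) ≤ Submodule.span ℝ U ⊔ Submodule.span ℝ W := by
    refine (hB.vectorSpan_rootLevel_le_span_erase hα).trans ?_
    rw [← Submodule.span_union, Submodule.span_le]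
    intro a ha
    obtain ⟨i, hi⟩ := Set.mem_iUnion.mp (hcover (hB.mem_rootLevel_zero_of_mem_erase hα ha))
    exact Submodule.subset_span ((em (p i)).imp (⟨i, ·, hi⟩) (⟨i, ·, hi⟩))
  exact Submodule.le_of_le_sup_of_isOrtho hSUW hUW hSW

end IsBase

end RootSystem

theorem stmt16_general (Φ Δ : Finset E) (c : E → E → ℝ)
    (hΦ : IsRootSystem Φ) (hB : IsBase Φ Δ c)
    (α : E) (hα : α ∈ Δ)
    (k : ℕ) (hk1 : 1 ≤ k)
    (t : ℕ) (Ψ : Fin t → Set E)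
    (hcover : (⋃ i, Ψ i) = {γ : E | γ ∈ Φ ∧ c γ α = 0})
    (horth : ∀ i j, i ≠ j → ∀ x ∈ Ψ i, ∀ y ∈ Ψ j, ⟪x, y⟫ = 0)
    (hirrc : ∀ i, IsIrredSet (Ψ i))
    (γ : E) (hγ : γ ∈ Φ ∧ c γ α = (k : ℝ))
    (hγmax : ∀ δ ∈ Φ, c δ α = (k : ℝ) → ‖δ‖ ≤ ‖γ‖)
    (h : ℕ)
    (hγorth : ∀ i : Fin t, (∀ δ ∈ Ψ i, ⟪γ, δ⟫ = 0) ↔ h ≤ i.val) :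
    Module.finrank ℝ (vectorSpan ℝ (convexHull ℝ {δ : E | δ ∈ Φ ∧ c δ α = (k : ℝ)})) =
      Module.finrank ℝ
        (Submodule.span ℝ {x : E | ∃ i : Fin t, i.val < h ∧ x ∈ Ψ i}) := by
  have hk : (k : ℝ) ≠ 0 := by exact_mod_cast (by omega : k ≠ 0)
  have hΨ₀ : ∀ i, Ψ i ⊆ rootLevel Φ c α 0 := fun i => (Set.subset_iUnion Ψ i).trans hcover.le
  have hlow : Submodule.span ℝ {x : E | ∃ i : Fin t, i.val < h ∧ x ∈ Ψ i} ≤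
      vectorSpan ℝ (rootLevel Φ c α k) := by
    refine Submodule.span_le.mpr ?_
    rintro x ⟨i, hi, hx⟩
    have hγΨ : ∃ y ∈ Ψ i, ⟪γ, y⟫ ≠ 0 := by
      by_contra! hγΨ
      exact hi.not_ge ((hγorth i).mp hγΨ)
    exact hB.subset_vectorSpan_rootLevel hΦ hα (hΨ₀ i) (hirrc i) hγ hγΨ hx
  have hhigh : ∀ i : Fin t, ¬ i.val < h →
      ∀ δ ∈ rootLevel Φ c α k, ∀ x ∈ Ψ i, ⟪δ, x⟫ = 0 := fun i hi =>
    hB.rootLevel_orthogonal_of_longest_orthogonal hΦ hα hk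
      (fun β hβ => (Set.mem_iUnion.mp (hcover.ge hβ)).elim fun j hj =>
        (eq_or_ne j i).imp (fun hji : j = i => hji ▸ hj) fun hji x hx => horth j i hji β hj x hx)
      hγ (fun δ hδ => hγmax δ hδ.1 hδ.2) ((hγorth i).mpr (not_lt.mp hi))
  have hspan := le_antisymm (hB.vectorSpan_rootLevel_le_span hα hcover.ge horth _ hhigh) hlow
  rw [← direction_affineSpan, affineSpan_convexHull, direction_affineSpan]
  exact congrArg (fun K : Submodule ℝ E => Module.finrank ℝ K) hspan

/-- Let `Φ_{α,k}` be the set of roots with `α`-coordinate `k`, `1 ≤ k ≤ m_α`, let `γ` be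
of maximal length in `Φ_{α,k}` and let `Ψ₀, …, Ψ_{t-1}` be the irreducible components of
the parabolic subsystem `Φ⟨Π \ {α}⟩`, with `γ ⊥ Ψᵢ` exactly for `i ≥ h`.  Then the
dimension of `conv(Φ_{α,k})` equals the rank of `Ψ₀ ∪ … ∪ Ψ_{h-1}`. -/
theorem stmt16 (Φ Δ : Finset E) (c : E → E → ℝ)
    (hΦ : IsRootSystem Φ) (hB : IsBase Φ Δ c) (hirr : IsIrredSys Φ)
    (α : E) (hα : α ∈ Δ) (θ : E)
    (hθ : θ ∈ Φ ∧ ∀ γ ∈ Φ, ∀ a ∈ Δ, c γ a ≤ c θ a)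
    (k : ℕ) (hk1 : 1 ≤ k) (hkm : (k : ℝ) ≤ c θ α)
    (t : ℕ) (Ψ : Fin t → Set E)
    (hcover : (⋃ i, Ψ i) = {γ : E | γ ∈ Φ ∧ c γ α = 0})
    (hne : ∀ i, (Ψ i).Nonempty)
    (horth : ∀ i j, i ≠ j → ∀ x ∈ Ψ i, ∀ y ∈ Ψ j, ⟪x, y⟫ = 0)
    (hirrc : ∀ i, IsIrredSet (Ψ i))
    (γ : E) (hγ : γ ∈ Φ ∧ c γ α = (k : ℝ))
    (hγmax : ∀ δ ∈ Φ, c δ α = (k : ℝ) → ‖δ‖ ≤ ‖γ‖)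
    (h : ℕ) (hht : h ≤ t)
    (hγorth : ∀ i : Fin t, (∀ δ ∈ Ψ i, ⟪γ, δ⟫ = 0) ↔ h ≤ i.val) :
    Module.finrank ℝ (vectorSpan ℝ (convexHull ℝ {δ : E | δ ∈ Φ ∧ c δ α = (k : ℝ)})) =
      Module.finrank ℝ
        (Submodule.span ℝ {x : E | ∃ i : Fin t, i.val < h ∧ x ∈ Ψ i}) :=
  stmt16_general Φ Δ c hΦ hB α hα k hk1 t Ψ hcover horth hirrc γ hγ hγmax h hγorth
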